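/- arXiv:2305.13847 — 2 statements merged into one kernel-verified Lean document; each statement's English description precedes it below -/
import Mathlib

section
/- Let e_ref, T_ref, R_v, L_ref > 0 and c_pv, c_l ∈ ℝ with c_l > c_pv, and define e_s : (0, ∞) → ℝ by e_s(T) = e_ref · (T/T_ref)^{(c_pv − c_l)/R_v} · exp( ((L_ref − (c_pv − c_l) T_ref)/R_v) · (1/T_ref − 1/T) ). Then e_s is strictly increasing on the interval (0, T_ref + L_ref/(c_l − c_pv)); that is, the saturation vapour pressure is strictly increasing in temperature on the whole range where the linearised latent heat L(T) = L_ref + (c_pv − c_l)(T − T_ref) is positive. -/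
/-!
Writing `(T / T_ref) ^ a = exp (a * log (T / T_ref))`, the saturation vapour pressure is
`e_ref * exp (g T)` with `g T = a * log (T / T_ref) + b * (1 / T_ref - 1 / T)`. Then
`g' T = (a * T + b) / T ^ 2`, and for the Clausius–Clapeyron constants
`a * T + b = L(T) / R_v`, which is positive exactly below `T_ref + L_ref / (c_l - c_pv)`.
-/

open Real Set

theorem hasDerivAt_mul_log_div_add_mul_inv_sub (a b T₀ : ℝ) {T : ℝ} (hT : T ≠ 0)
    (hT₀ : T₀ ≠ 0) :
    HasDerivAt (fun T => a * log (T / T₀) + b * (1 / T₀ - 1 / T)) ((a * T + b) / T ^ 2) T := by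
  have hlog : HasDerivAt (fun T => log (T / T₀)) (1 / T₀ / (T / T₀)) T :=
    ((hasDerivAt_id T).div_const T₀).log (div_ne_zero hT hT₀)
  have hinv : HasDerivAt (fun T => 1 / T₀ - 1 / T) (-(-(T ^ 2)⁻¹)) T := by
    simpa only [one_div] using ((hasDerivAt_inv hT).const_sub T₀⁻¹)
  refine ((hlog.const_mul a).add (hinv.const_mul b)).congr_deriv ?_
  field_simp

theorem strictMonoOn_mul_log_div_add_mul_inv_sub {a b T₀ : ℝ} (hT₀ : T₀ ≠ 0) {s : Set ℝ}
    (hs : Convex ℝ s) (hs₀ : ∀ T ∈ s, 0 < T) (hab : ∀ T ∈ s, 0 < a * T + b) :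
    StrictMonoOn (fun T => a * log (T / T₀) + b * (1 / T₀ - 1 / T)) s := by
  have hderiv (T) (hT : T ∈ s) := hasDerivAt_mul_log_div_add_mul_inv_sub a b T₀ (hs₀ T hT).ne' hT₀
  refine strictMonoOn_of_hasDerivWithinAt_pos hs
    (fun T hT => (hderiv T hT).continuousAt.continuousWithinAt)
    (fun T hT => (hderiv T (interior_subset hT)).hasDerivWithinAt) fun T hT => ?_
  have hTs : T ∈ s := interior_subset hT
  exact div_pos (hab T hTs) (pow_pos (hs₀ T hTs) 2)

theorem strictMonoOn_mul_div_rpow_mul_exp {e₀ T₀ a b : ℝ} (he₀ : 0 < e₀) (hT₀ : 0 < T₀)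
    {s : Set ℝ} (hs : Convex ℝ s) (hs₀ : ∀ T ∈ s, 0 < T) (hab : ∀ T ∈ s, 0 < a * T + b) :
    StrictMonoOn (fun T => e₀ * (T / T₀) ^ a * exp (b * (1 / T₀ - 1 / T))) s := by
  refine ((exp_strictMono.const_mul he₀).comp_strictMonoOn
    (strictMonoOn_mul_log_div_add_mul_inv_sub hT₀.ne' hs hs₀ hab)).congr fun T hT => ?_
  rw [Function.comp_apply, rpow_def_of_pos (div_pos (hs₀ T hT) hT₀), exp_add, mul_comm (log _),
    mul_assoc]

theorem saturation_vapour_pressure_strictMono_general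
    (e_ref T_ref R_v L_ref : ℝ)
    (he_ref : 0 < e_ref) (hT_ref : 0 < T_ref) (hR_v : 0 < R_v)
    (c_pv c_l : ℝ) (hcl : c_pv < c_l)
    (es : ℝ → ℝ)
    (hes : ∀ T : ℝ, es T =
      e_ref * (T / T_ref) ^ ((c_pv - c_l) / R_v)
        * Real.exp ((L_ref - (c_pv - c_l) * T_ref) / R_v * (1 / T_ref - 1 / T))) :
    StrictMonoOn es (Set.Ioo 0 (T_ref + L_ref / (c_l - c_pv))) := by
  rw [funext hes]
  refine strictMonoOn_mul_div_rpow_mul_exp he_ref hT_ref (convex_Ioo _ _)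
    (fun T hT => hT.1) fun T hT => ?_
  have hL : (c_l - c_pv) * (T - T_ref) < L_ref := by
    rw [← lt_div_iff₀' (sub_pos.2 hcl)]
    linarith [hT.2]
  rw [div_mul_eq_mul_div, ← add_div]
  exact div_pos (by linarith) hR_v

/-- The saturation vapour pressure is strictly increasing in temperature on the whole
range `(0, T_ref + L_ref/(c_l − c_pv))` where the linearised latent heat
`L(T) = L_ref + (c_pv − c_l)(T − T_ref)` is positive. -/
theorem saturation_vapour_pressure_strictMono
    (e_ref T_ref R_v L_ref : ℝ)
    (he_ref : 0 < e_ref) (hT_ref : 0 < T_ref) (hR_v : 0 < R_v) (hL_ref : 0 < L_ref)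
    (c_pv c_l : ℝ) (hcl : c_pv < c_l)
    (es : ℝ → ℝ)
    (hes : ∀ T : ℝ, es T =
      e_ref * (T / T_ref) ^ ((c_pv - c_l) / R_v)
        * Real.exp ((L_ref - (c_pv - c_l) * T_ref) / R_v * (1 / T_ref - 1 / T))) :
    StrictMonoOn es (Set.Ioo 0 (T_ref + L_ref / (c_l - c_pv))) :=
  saturation_vapour_pressure_strictMono_general e_ref T_ref R_v L_ref he_ref hT_ref hR_v c_pv c_l
    hcl es hes
end

section
/- Let e_ref, T_ref, R_v, c_vd, c_vv, c_l > 0 and L_ref ∈ ℝ, set c_pv := c_vv + R_v, let e_s(T) = e_ref · (T/T_ref)^{(c_pv − c_l)/R_v} · exp( ((L_ref − (c_pv − c_l) T_ref)/R_v) · (1/T_ref − 1/T) ) for T > 0, and L(T) = L_ref + (c_pv − c_l)(T − T_ref). Fix ρ_d > 0 and ρ_m, ρ_r ≥ 0, and define ρ_v(T) := min( e_s(T)/(R_v T), ρ_m ), ρ_c(T) := ρ_m − ρ_v(T), and E_int(T) := (c_vd ρ_d + c_vv ρ_v(T) + c_l (ρ_c(T) + ρ_r)) (T − T_ref) + ρ_v(T)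 (L_ref − R_v T_ref). Let J ⊆ (0, ∞) be an interval on which L(T) − R_v T > 0. Then E_int is strictly increasing on J; consequently, for every ε ∈ ℝ there is at most one T ∈ J satisfying the implicit condensation system E_int(T) = ε, i.e. the temperature (and hence also the vapour density ρ_v(T) and cloud density ρ_c(T)) recovered from the conserved variables is unique. -/
/-!
Up to the positive factor `e_ref / R_v · exp (b / T_ref - a log T_ref)`, the saturation vapour
density `e_s(T) / (R_v T)` is `exp ((a - 1) log T - b / T)` with `a = (c_pv - c_l) / R_v` and
`b = (L_ref - (c_pv - c_l) T_ref) / R_v`. The exponent has derivative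
`(L(T) - R_v T) / (R_v T²) > 0`, so the saturation density, and with it `ρ_v = min (·, ρ_m)`,
increases on `J`. For `T₁ < T₂` the energy then splits as
`E(T₂) - E(T₁) = c(T₂) (T₂ - T₁) + (ρ_v(T₂) - ρ_v(T₁)) (L(T₁) - R_v T₁)`,
where `c(T₂) > 0` is the heat capacity at `T₂`: a positive term plus a non-negative one.
-/

open Real

noncomputable def satVapourDensity (e_ref T_ref R_v a b T : ℝ) : ℝ :=
  e_ref * (T / T_ref) ^ a * exp (b * (1 / T_ref - 1 / T)) / (R_v * T)

theorem strictMonoOn_mul_log_sub_div (c b : ℝ) {J : Set ℝ} (hJ : J ⊆ Set.Ioi 0)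
    (hJc : J.OrdConnected) (hpos : ∀ T ∈ J, 0 < c * T + b) :
    StrictMonoOn (fun T => c * log T - b / T) J := by
  have hderiv : ∀ x : ℝ, 0 < x →
      HasDerivAt (fun T => c * log T - b / T) ((c * x + b) / x ^ 2) x := by
    intro x hx
    have h := ((hasDerivAt_log hx.ne').const_mul c).sub ((hasDerivAt_inv hx.ne').const_mul b)
    simp only [← div_eq_mul_inv] at h
    exact h.congr_deriv (by field_simp; ring)
  refine strictMonoOn_of_hasDerivWithinAt_pos hJc.convex
    (fun x hx => (hderiv x (hJ hx)).continuousAt.continuousWithinAt)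
    (fun x hx => (hderiv x (hJ (interior_subset hx))).hasDerivWithinAt) ?_
  intro x hx
  have hx0 : 0 < x := hJ (interior_subset hx)
  exact div_pos (hpos x (interior_subset hx)) (by positivity)

theorem satVapourDensity_eq_mul_exp (e_ref T_ref R_v a b : ℝ) (hT_ref : 0 < T_ref)
    {T : ℝ} (hT : 0 < T) :
    satVapourDensity e_ref T_ref R_v a b T
      = e_ref / R_v * exp (b / T_ref - a * log T_ref) * exp ((a - 1) * log T - b / T) := by
  calc satVapourDensity e_ref T_ref R_v a b T
      = e_ref / R_v * (exp ((log T - log T_ref) * a + b * (1 / T_ref - 1 / T)) / exp (log T)) := by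
        rw [satVapourDensity, rpow_def_of_pos (div_pos hT hT_ref), log_div hT.ne' hT_ref.ne',
          exp_add, exp_log hT]
        ring
    _ = e_ref / R_v * exp (b / T_ref - a * log T_ref + ((a - 1) * log T - b / T)) := by
        rw [← exp_sub]
        congr 2
        ring
    _ = e_ref / R_v * exp (b / T_ref - a * log T_ref) * exp ((a - 1) * log T - b / T) := by
        rw [exp_add, mul_assoc]

theorem strictMonoOn_satVapourDensity (e_ref T_ref R_v a b : ℝ) (he_ref : 0 < e_ref)
    (hT_ref : 0 < T_ref) (hR_v : 0 < R_v) {J : Set ℝ} (hJ : J ⊆ Set.Ioi 0)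
    (hJc : J.OrdConnected) (hpos : ∀ T ∈ J, 0 < (a - 1) * T + b) :
    StrictMonoOn (satVapourDensity e_ref T_ref R_v a b) J := by
  intro T₁ h₁ T₂ h₂ hlt
  rw [satVapourDensity_eq_mul_exp _ _ _ _ _ hT_ref (hJ h₁),
    satVapourDensity_eq_mul_exp _ _ _ _ _ hT_ref (hJ h₂)]
  have hexp := exp_lt_exp.2 (strictMonoOn_mul_log_sub_div (a - 1) b hJ hJc hpos h₁ h₂ hlt)
  exact mul_lt_mul_of_pos_left hexp (by positivity)

theorem satVapourDensity_pos (e_ref T_ref R_v a b : ℝ) (he_ref : 0 < e_ref)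
    (hT_ref : 0 < T_ref) (hR_v : 0 < R_v) {T : ℝ} (hT : 0 < T) :
    0 < satVapourDensity e_ref T_ref R_v a b T := by
  rw [satVapourDensity_eq_mul_exp _ _ _ _ _ hT_ref hT]
  positivity

theorem strictMonoOn_energy (α β D T₀ : ℝ) {v : ℝ → ℝ} {J : Set ℝ} (hv : MonotoneOn v J)
    (hcap : ∀ T ∈ J, 0 < α + β * v T) (hlat : ∀ T ∈ J, 0 < β * (T - T₀) + D) :
    StrictMonoOn (fun T => (α + β * v T) * (T - T₀) + v T * D) J := by
  intro T₁ h₁ T₂ h₂ hlt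
  have hsplit : (α + β * v T₂) * (T₂ - T₀) + v T₂ * D - ((α + β * v T₁) * (T₁ - T₀) + v T₁ * D)
      = (α + β * v T₂) * (T₂ - T₁) + (v T₂ - v T₁) * (β * (T₁ - T₀) + D) := by ring
  have hsens := mul_pos (hcap T₂ h₂) (sub_pos.2 hlt)
  have hlatent := mul_nonneg (sub_nonneg.2 (hv h₁ h₂ hlt.le)) (hlat T₁ h₁).le
  dsimp only
  linarith

/-- Uniqueness for the implicit condensation system: with
`ρ_v(T) = min(e_s(T)/(R_v T), ρ_m)`, `ρ_c(T) = ρ_m − ρ_v(T)` and the internal energy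
`E_int(T) = (c_vd ρ_d + c_vv ρ_v(T) + c_l(ρ_c(T) + ρ_r))(T − T_ref)
  + ρ_v(T)(L_ref − R_v T_ref)`, the function `E_int` is strictly increasing on any
interval `J ⊆ (0, ∞)` on which `L(T) − R_v T > 0`; consequently for every `ε` there is
at most one `T ∈ J` with `E_int(T) = ε`. -/
theorem implicit_condensation_uniqueness
    (e_ref T_ref R_v c_vd c_vv c_l : ℝ)
    (he_ref : 0 < e_ref) (hT_ref : 0 < T_ref) (hR_v : 0 < R_v)
    (hc_vd : 0 < c_vd) (hc_vv : 0 < c_vv) (hc_l : 0 < c_l)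
    (L_ref c_pv : ℝ) (hc_pv : c_pv = c_vv + R_v)
    (es ρv ρc Eint : ℝ → ℝ)
    (hes : ∀ T : ℝ, es T =
      e_ref * (T / T_ref) ^ ((c_pv - c_l) / R_v)
        * Real.exp ((L_ref - (c_pv - c_l) * T_ref) / R_v * (1 / T_ref - 1 / T)))
    (ρd ρm ρr : ℝ) (hρd : 0 < ρd) (hρm : 0 ≤ ρm) (hρr : 0 ≤ ρr)
    (hρv : ∀ T : ℝ, ρv T = min (es T / (R_v * T)) ρm)
    (hρc : ∀ T : ℝ, ρc T = ρm - ρv T)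
    (hEint : ∀ T : ℝ, Eint T =
      (c_vd * ρd + c_vv * ρv T + c_l * (ρc T + ρr)) * (T - T_ref)
        + ρv T * (L_ref - R_v * T_ref))
    (J : Set ℝ) (hJ : J ⊆ Set.Ioi 0) (hJc : J.OrdConnected)
    (hL : ∀ T ∈ J, 0 < (L_ref + (c_pv - c_l) * (T - T_ref)) - R_v * T) :
    StrictMonoOn Eint J ∧
      ∀ ε : ℝ, ∀ T₁ ∈ J, ∀ T₂ ∈ J, Eint T₁ = ε → Eint T₂ = ε → T₁ = T₂ := by
  set a := (c_pv - c_l) / R_v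
  set b := (L_ref - (c_pv - c_l) * T_ref) / R_v
  have hρv_sat : ∀ T, ρv T = min (satVapourDensity e_ref T_ref R_v a b T) ρm := fun T => by
    rw [hρv, hes, satVapourDensity]
  have hsat := strictMonoOn_satVapourDensity e_ref T_ref R_v a b he_ref hT_ref hR_v hJ hJc
    fun T hT => by
      have : (a - 1) * T + b = (L_ref + (c_pv - c_l) * (T - T_ref) - R_v * T) / R_v := by
        simp only [a, b]
        field_simp
        ring
      exact this ▸ div_pos (hL T hT) hR_v
  have hρv_mono : MonotoneOn ρv J := fun T₁ h₁ T₂ h₂ hle => by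
    simpa only [hρv_sat] using min_le_min_right ρm (hsat.monotoneOn h₁ h₂ hle)
  have hEint_eq : Eint = fun T =>
      (c_vd * ρd + c_l * (ρm + ρr) + (c_vv - c_l) * ρv T) * (T - T_ref)
        + ρv T * (L_ref - R_v * T_ref) := funext fun T => by
    rw [hEint, hρc]
    ring
  have hcap : ∀ T ∈ J, 0 < c_vd * ρd + c_l * (ρm + ρr) + (c_vv - c_l) * ρv T := by
    intro T hT
    have hv₀ : 0 ≤ ρv T :=
      hρv_sat T ▸ le_min (satVapourDensity_pos _ _ _ _ _ he_ref hT_ref hR_v (hJ hT)).le hρm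
    have hvm : ρv T ≤ ρm := hρv_sat T ▸ min_le_right _ _
    nlinarith [mul_pos hc_vd hρd, mul_nonneg hc_l.le (sub_nonneg.2 hvm),
      mul_nonneg hc_l.le hρr, mul_nonneg hc_vv.le hv₀]
  have hsm : StrictMonoOn Eint J := hEint_eq ▸ strictMonoOn_energy _ _ _ _ hρv_mono hcap
    fun T hT => by
      have hLT := hL T hT
      rw [hc_pv] at hLT
      linarith
  exact ⟨hsm, fun ε T₁ h₁ T₂ h₂ e₁ e₂ => hsm.injOn h₁ h₂ (e₁.trans e₂.symm)⟩
end
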